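/- arXiv:2506.10371 — 5 statements merged into one kernel-verified Lean document; each statement's English description precedes it below -/
import Mathlib

section
/- Let d and N be positive integers and let y_1, ..., y_N and p_1, ..., p_N be vectors in ℝ^d. For a fixed index i, define the self-attention kernel weights w_j = exp(((y_i + p_i) · (y_j + p_j)) / √d) for j = 1, ..., N. Then the unique minimizer over u ∈ ℝ^d of ∑_{j=1}^N w_j · ‖y_j − u‖² is û_i = ∑_{j=1}^N softmax_j(((y_i + p_i) · (y_j + p_j)) / √d) · y_j, i.e., the self-attention output with identity query/key/value projection matrices. Here softmax_j(a_j) denotes the j-th component of softmax applied to the vector (a_1, ..., a_N). -/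
open Finset

/-- Weighted least squares: if all weights are positive and `uhat` is the weighted
average, then `uhat` is the unique minimizer of `u ↦ ∑ j, w j * ‖y j - u‖²`. -/
lemma weighted_ls_aux {d N : ℕ} (w : Fin N → ℝ) (hw : ∀ j, 0 < w j) (hN : 0 < N)
    (y : Fin N → EuclideanSpace ℝ (Fin d))
    (u : EuclideanSpace ℝ (Fin d)) :
    let uhat : EuclideanSpace ℝ (Fin d) := ∑ j, (w j / ∑ k, w k) • y j
    (∑ j, w j * ‖y j - uhat‖ ^ 2) ≤ (∑ j, w j * ‖y j - u‖ ^ 2) ∧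
      ((∑ j, w j * ‖y j - uhat‖ ^ 2) = (∑ j, w j * ‖y j - u‖ ^ 2) → u = uhat) := by
  intro uhat
  have hWpos : 0 < ∑ k, w k :=
    Finset.sum_pos (fun k _ => hw k) (Finset.univ_nonempty_iff.2 (Fin.pos_iff_nonempty.1 hN))
  have hW : (∑ k, w k) ≠ 0 := ne_of_gt hWpos
  -- key: ∑ w j • (y j - uhat) = 0
  have hkey : ∑ j, w j • (y j - uhat) = 0 := by
    have : ∑ j, w j • (y j - uhat) = (∑ j, w j • y j) - (∑ j, w j) • uhat := by
      simp only [smul_sub]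
      rw [Finset.sum_sub_distrib, Finset.sum_smul]
    rw [this]
    have : (∑ j, w j) • uhat = ∑ j, w j • y j := by
      simp only [uhat, Finset.smul_sum, smul_smul]
      congr 1
      funext j
      rw [mul_div_cancel₀ _ hW]
    rw [this, sub_self]
  -- decomposition
  have hdecomp : ∑ j, w j * ‖y j - u‖ ^ 2
      = (∑ j, w j * ‖y j - uhat‖ ^ 2) + (∑ j, w j) * ‖uhat - u‖ ^ 2 := by
    have expand : ∀ j, w j * ‖y j - u‖ ^ 2
        = w j * ‖y j - uhat‖ ^ 2 + 2 * (inner ℝ (w j • (y j - uhat)) (uhat - u) : ℝ)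
          + w j * ‖uhat - u‖ ^ 2 := by
      intro j
      have h1 : y j - u = (y j - uhat) + (uhat - u) := by abel
      rw [h1, norm_add_sq_real, inner_smul_left]
      simp only [RCLike.star_def, starRingEnd_apply, star_trivial]
      ring
    rw [Finset.sum_congr rfl (fun j _ => expand j), Finset.sum_add_distrib,
      Finset.sum_add_distrib]
    have : ∑ j, 2 * (inner ℝ (w j • (y j - uhat)) (uhat - u) : ℝ) = 0 := by
      rw [← Finset.mul_sum, ← sum_inner, hkey, inner_zero_left, mul_zero]
    rw [this, ← Finset.sum_mul]
    ring
  constructor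
  · rw [hdecomp]
    nlinarith [sq_nonneg ‖uhat - u‖, mul_nonneg hWpos.le (sq_nonneg ‖uhat - u‖)]
  · intro heq
    rw [hdecomp] at heq
    have : (∑ j, w j) * ‖uhat - u‖ ^ 2 = 0 := by linarith
    have h0 : ‖uhat - u‖ ^ 2 = 0 := by
      rcases mul_eq_zero.1 this with h | h
      · exact absurd h hW
      · exact h
    have : uhat - u = 0 := by
      rw [pow_eq_zero_iff (by norm_num), norm_eq_zero] at h0
      exact h0
    rw [sub_eq_zero] at this
    exact this.symm

/-- Theorem 1 of the paper, 1-layer Transformer: with the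
self-attention kernel weights `w j = exp(⟪y i + p i, y j + p j⟫ / √d)`,
the unique minimizer of `u ↦ ∑ j, w j * ‖y j − u‖²` is the self-attention
output `û i = ∑ j, softmax_j (⟪y i + p i, y j + p j⟫ / √d) • y j`. -/
theorem self_attention_is_weighted_least_squares
    (d N : ℕ) (hd : 0 < d) (hN : 0 < N)
    (y p : Fin N → EuclideanSpace ℝ (Fin d)) (i : Fin N) :
    let w : Fin N → ℝ := fun j =>
      Real.exp ((inner ℝ (y i + p i) (y j + p j) : ℝ) / Real.sqrt d)
    let uhat : EuclideanSpace ℝ (Fin d) := ∑ j, (w j / ∑ k, w k) • y j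
    ∀ u : EuclideanSpace ℝ (Fin d),
      (∑ j, w j * ‖y j - uhat‖ ^ 2) ≤ (∑ j, w j * ‖y j - u‖ ^ 2) ∧
      ((∑ j, w j * ‖y j - uhat‖ ^ 2) = (∑ j, w j * ‖y j - u‖ ^ 2) → u = uhat) := by
  intro w uhat u
  exact weighted_ls_aux w (fun j => Real.exp_pos _) hN y u
end

section
/- Let u, û, η, η̂ be vectors in a real inner product space with u ≠ 0, η ≠ 0, and η + η̂ ≠ 0. Suppose there exist constants α, β, γ ∈ [0, 1] with α·β > γ such that ‖û‖ = α·‖u‖, ⟨u, û⟩ ≥ β·‖u‖·‖û‖, and ‖η̂‖ = γ·‖η‖. Then ‖u + û‖ / ‖η + η̂‖ ≥ (√(1 + 2αβ + α²) / (1 + γ)) · (‖u‖ / ‖η‖), and moreover √(1 + 2αβ + α²) / (1 + γ) > 1; in particular the signal-to-noise ratio of y + ŷ strictly exceeds that of y. -/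
/-- Proposition 1 of the paper, Residual Connections Boost SNR:
for `y = u + η` and `ŷ = û + η̂` with `‖û‖ = α‖u‖`, `⟪u, û⟫ ≥ β‖u‖‖û‖`,
`‖η̂‖ = γ‖η‖` and `αβ > γ`, the SNR of `y + ŷ` exceeds that of `y` by a
factor of at least `√(1 + 2αβ + α²)/(1 + γ) > 1`. -/
theorem residual_connection_boosts_snr
    {E : Type*} [NormedAddCommGroup E] [InnerProductSpace ℝ E]
    (u uhat eta etahat : E)
    (hu : u ≠ 0) (heta : eta ≠ 0) (hsum : eta + etahat ≠ 0)
    (α β γ : ℝ)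
    (hα : α ∈ Set.Icc (0 : ℝ) 1) (hβ : β ∈ Set.Icc (0 : ℝ) 1)
    (hγ : γ ∈ Set.Icc (0 : ℝ) 1)
    (hαβγ : α * β > γ)
    (huhat : ‖uhat‖ = α * ‖u‖)
    (hcos : (inner ℝ u uhat : ℝ) ≥ β * ‖u‖ * ‖uhat‖)
    (hetahat : ‖etahat‖ = γ * ‖eta‖) :
    ‖u + uhat‖ / ‖eta + etahat‖
        ≥ (Real.sqrt (1 + 2 * α * β + α ^ 2) / (1 + γ)) * (‖u‖ / ‖eta‖) ∧
      Real.sqrt (1 + 2 * α * β + α ^ 2) / (1 + γ) > 1 := by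
  obtain ⟨hα0, hα1⟩ := hα
  obtain ⟨hβ0, hβ1⟩ := hβ
  obtain ⟨hγ0, hγ1⟩ := hγ
  have hun : (0:ℝ) < ‖u‖ := norm_pos_iff.mpr hu
  have hen : (0:ℝ) < ‖eta‖ := norm_pos_iff.mpr heta
  have hsn : (0:ℝ) < ‖eta + etahat‖ := norm_pos_iff.mpr hsum
  set S : ℝ := 1 + 2 * α * β + α ^ 2 with hS
  have hS0 : (0:ℝ) ≤ S := by nlinarith
  -- numerator bound
  have hsq : ‖u + uhat‖ ^ 2 ≥ S * ‖u‖ ^ 2 := by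
    have h := norm_add_sq_real u uhat
    rw [hS]
    rw [huhat] at h hcos
    nlinarith [hcos, hun.le]
  have hnum : Real.sqrt S * ‖u‖ ≤ ‖u + uhat‖ := by
    have : Real.sqrt (S * ‖u‖ ^ 2) ≤ Real.sqrt (‖u + uhat‖ ^ 2) :=
      Real.sqrt_le_sqrt hsq
    rwa [Real.sqrt_mul hS0, Real.sqrt_sq hun.le, Real.sqrt_sq (norm_nonneg _)] at this
  -- denominator bound
  have hden : ‖eta + etahat‖ ≤ (1 + γ) * ‖eta‖ := by
    calc ‖eta + etahat‖ ≤ ‖eta‖ + ‖etahat‖ := norm_add_le _ _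
      _ = (1 + γ) * ‖eta‖ := by rw [hetahat]; ring
  have hγpos : (0:ℝ) < 1 + γ := by linarith
  constructor
  · rw [ge_iff_le, div_mul_div_comm, div_le_div_iff₀ (by positivity) hsn]
    calc Real.sqrt S * ‖u‖ * ‖eta + etahat‖
        ≤ ‖u + uhat‖ * ((1 + γ) * ‖eta‖) := by
          apply mul_le_mul hnum hden hsn.le (norm_nonneg _)
      _ = ‖u + uhat‖ * ((1 + γ) * ‖eta‖) := rfl
  · rw [gt_iff_lt, lt_div_iff₀ hγpos, one_mul]
    have hγα : γ < α := lt_of_lt_of_le hαβγ (by nlinarith)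
    have : (1 + γ) ^ 2 < S := by rw [hS]; nlinarith
    calc (1 + γ) = Real.sqrt ((1 + γ) ^ 2) := (Real.sqrt_sq hγpos.le).symm
      _ < Real.sqrt S := Real.sqrt_lt_sqrt (by positivity) this
end

section
/- Let d be a positive integer, let c > 0, and let y_i, y_j, p_i, p_j ∈ ℝ^d satisfy ‖y_i‖ = ‖y_j‖ = c and ‖p_i‖² = ‖p_j‖² = d/2. Define K_SA = exp(((y_i + p_i) · (y_j + p_j)) / √d) and, for vectors a, b, u, v ∈ ℝ^d, define K_BF(a, b, u, v) = exp(−‖a − b‖² / (2√d)) · exp(−‖u − v‖² / (2√d)). Then K_SA = α_c · K_BF(p_i, p_j, y_i, y_j) · K_BF(p_i, y_j, p_j, y_i), where α_c = exp((2c² + d) / √d). -/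
/-- the self-attention kernel factors as a constant times the
product of two bilateral filter kernels (with bandwidths `h_p² = h_y² = 2√d`):
`K_SA = α_c · K_BF(p_i, p_j, y_i, y_j) · K_BF(p_i, y_j, p_j, y_i)`,
where `α_c = exp((2c² + d)/√d)`. -/
theorem self_attention_kernel_eq_bilateral_product
    (d : ℕ) (hd : 0 < d) (c : ℝ) (hc : 0 < c)
    (yi yj pi pj : EuclideanSpace ℝ (Fin d))
    (hyi : ‖yi‖ = c) (hyj : ‖yj‖ = c)
    (hpi : ‖pi‖ ^ 2 = (d : ℝ) / 2) (hpj : ‖pj‖ ^ 2 = (d : ℝ) / 2) :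
    let K_BF : EuclideanSpace ℝ (Fin d) → EuclideanSpace ℝ (Fin d) →
        EuclideanSpace ℝ (Fin d) → EuclideanSpace ℝ (Fin d) → ℝ := fun a b u v =>
      Real.exp (-‖a - b‖ ^ 2 / (2 * Real.sqrt d)) *
        Real.exp (-‖u - v‖ ^ 2 / (2 * Real.sqrt d))
    Real.exp ((inner ℝ (yi + pi) (yj + pj) : ℝ) / Real.sqrt d)
      = Real.exp ((2 * c ^ 2 + d) / Real.sqrt d) *
          K_BF pi pj yi yj * K_BF pi yj pj yi := by
  intro K_BF
  have hs : (0:ℝ) < Real.sqrt d := Real.sqrt_pos.mpr (by exact_mod_cast hd)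
  simp only [K_BF, ← Real.exp_add]
  congr 1
  have e1 : ‖pi - pj‖ ^ 2 = ‖pi‖^2 + ‖pj‖^2 - 2 * (inner ℝ pi pj : ℝ) := by
    rw [@norm_sub_sq_real]; ring
  have e2 : ‖yi - yj‖ ^ 2 = ‖yi‖^2 + ‖yj‖^2 - 2 * (inner ℝ yi yj : ℝ) := by
    rw [@norm_sub_sq_real]; ring
  have e3 : ‖pi - yj‖ ^ 2 = ‖pi‖^2 + ‖yj‖^2 - 2 * (inner ℝ pi yj : ℝ) := by
    rw [@norm_sub_sq_real]; ring
  have e4 : ‖pj - yi‖ ^ 2 = ‖pj‖^2 + ‖yi‖^2 - 2 * (inner ℝ pj yi : ℝ) := by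
    rw [@norm_sub_sq_real]; ring
  have hi : (inner ℝ (yi + pi) (yj + pj) : ℝ)
      = inner ℝ yi yj + inner ℝ yi pj + inner ℝ pi yj + inner ℝ pi pj := by
    simp [inner_add_left, inner_add_right]; ring
  rw [hi, e1, e2, e3, e4, hpi, hpj, hyi, hyj, real_inner_comm pj yi]
  field_simp
  ring
end

section
/- Fix λ > 0 and a positive integer N, and define softmax_λ : ℝ^N → ℝ^N by (softmax_λ(x))_i = exp(λ x_i) / ∑_{j=1}^N exp(λ x_j). Then softmax_λ is λ-Lipschitz with respect to the Euclidean norm: for all x, y ∈ ℝ^N, ‖softmax_λ(x) − softmax_λ(y)‖ ≤ λ · ‖x − y‖. -/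
open Finset

noncomputable def smS (lam : ℝ) {N : ℕ} (z : EuclideanSpace ℝ (Fin N)) : ℝ :=
  ∑ j, Real.exp (lam * z j)

noncomputable def smDe (lam : ℝ) {N : ℕ} (z : EuclideanSpace ℝ (Fin N)) (i : Fin N) :
    EuclideanSpace ℝ (Fin N) →L[ℝ] ℝ :=
  Real.exp (lam * z i) • (lam • (EuclideanSpace.proj i : EuclideanSpace ℝ (Fin N) →L[ℝ] ℝ))

noncomputable def smDS (lam : ℝ) {N : ℕ} (z : EuclideanSpace ℝ (Fin N)) :
    EuclideanSpace ℝ (Fin N) →L[ℝ] ℝ := ∑ i, smDe lam z i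

noncomputable def smDinv (lam : ℝ) {N : ℕ} (z : EuclideanSpace ℝ (Fin N)) :
    EuclideanSpace ℝ (Fin N) →L[ℝ] ℝ :=
  (ContinuousLinearMap.smulRight (1 : ℝ →L[ℝ] ℝ) (-(smS lam z ^ 2)⁻¹)).comp (smDS lam z)

noncomputable def smDcomp (lam : ℝ) {N : ℕ} (z : EuclideanSpace ℝ (Fin N)) (i : Fin N) :
    EuclideanSpace ℝ (Fin N) →L[ℝ] ℝ :=
  Real.exp (lam * z i) • smDinv lam z + (smS lam z)⁻¹ • smDe lam z i

noncomputable def smD (lam : ℝ) {N : ℕ} (z : EuclideanSpace ℝ (Fin N)) :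
    EuclideanSpace ℝ (Fin N) →L[ℝ] EuclideanSpace ℝ (Fin N) :=
  (((EuclideanSpace.equiv (Fin N) ℝ).symm : (Fin N → ℝ) ≃L[ℝ] EuclideanSpace ℝ (Fin N))
    : (Fin N → ℝ) →L[ℝ] EuclideanSpace ℝ (Fin N)).comp
      (ContinuousLinearMap.pi (smDcomp lam z))

theorem smS_pos (lam : ℝ) {N : ℕ} (hN : 0 < N) (z : EuclideanSpace ℝ (Fin N)) :
    0 < smS lam z := by
  haveI : Nonempty (Fin N) := ⟨⟨0, hN⟩⟩
  exact Finset.sum_pos (fun j _ => Real.exp_pos _) Finset.univ_nonempty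

theorem smHasFDeriv (lam : ℝ) {N : ℕ} (hN : 0 < N) (z : EuclideanSpace ℝ (Fin N)) :
    HasFDerivAt (E := EuclideanSpace ℝ (Fin N)) (F := EuclideanSpace ℝ (Fin N))
      (fun y => WithLp.toLp 2 (fun i => Real.exp (lam * y i) / ∑ j, Real.exp (lam * y j)))
      (smD lam z) z := by
  have hexp : ∀ i : Fin N,
      HasFDerivAt (fun y : EuclideanSpace ℝ (Fin N) => Real.exp (lam * y i)) (smDe lam z i) z := by
    intro i
    have h1 : HasFDerivAt (fun y : EuclideanSpace ℝ (Fin N) => lam * y i)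
        (lam • (EuclideanSpace.proj i : EuclideanSpace ℝ (Fin N) →L[ℝ] ℝ)) z :=
      (EuclideanSpace.proj i : EuclideanSpace ℝ (Fin N) →L[ℝ] ℝ).hasFDerivAt.const_mul lam
    exact h1.exp
  have hS : HasFDerivAt (smS lam (N := N)) (smDS lam z) z :=
    HasFDerivAt.fun_sum (fun i _ => hexp i)
  have hInv : HasFDerivAt (fun y : EuclideanSpace ℝ (Fin N) => (smS lam y)⁻¹) (smDinv lam z) z :=
    (hasFDerivAt_inv (smS_pos lam hN z).ne').comp z hS
  have hcomp : ∀ i : Fin N,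
      HasFDerivAt (fun y : EuclideanSpace ℝ (Fin N) => Real.exp (lam * y i) / smS lam y)
        (smDcomp lam z i) z := by
    intro i
    have := (hexp i).fun_mul hInv
    simpa [div_eq_mul_inv, smDcomp] using this
  have hF : HasFDerivAt (fun (y : EuclideanSpace ℝ (Fin N)) (i : Fin N) =>
      Real.exp (lam * y i) / smS lam y) (ContinuousLinearMap.pi (smDcomp lam z)) z := by
    apply hasFDerivAt_pi'.2
    intro i
    rw [ContinuousLinearMap.proj_pi]
    exact hcomp i
  exact ((EuclideanSpace.equiv (Fin N) ℝ).symm.hasFDerivAt).comp z hF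

theorem smD_norm_le (lam : ℝ) (hlam : 0 < lam) {N : ℕ} (hN : 0 < N)
    (z : EuclideanSpace ℝ (Fin N)) : ‖smD lam z‖ ≤ lam := by
  apply ContinuousLinearMap.opNorm_le_bound _ hlam.le
  intro v
  have hSpos := smS_pos lam hN z
  have hS0 : smS lam z ≠ 0 := hSpos.ne'
  set p : Fin N → ℝ := fun i => Real.exp (lam * z i) / smS lam z with hp
  set m : ℝ := ∑ j, p j * v j with hm
  have hppos : ∀ i, 0 < p i := fun i => div_pos (Real.exp_pos _) hSpos
  have hple : ∀ i, p i ≤ 1 := by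
    intro i
    rw [hp, div_le_one hSpos]
    exact Finset.single_le_sum (f := fun j => Real.exp (lam * z j))
      (fun j _ => (Real.exp_pos _).le) (Finset.mem_univ i)
  have hpsum : ∑ i, p i = 1 := by
    rw [hp, ← Finset.sum_div]
    exact div_self hS0
  have hsum : (∑ j, Real.exp (lam * z j) * (lam * v j))
      = lam * ∑ j, Real.exp (lam * z j) * v j := by
    rw [Finset.mul_sum]; exact Finset.sum_congr rfl fun j _ => by ring
  have hmS : m = (∑ j, Real.exp (lam * z j) * v j) / smS lam z := by
    rw [hm, Finset.sum_div]
    exact Finset.sum_congr rfl fun j _ => by rw [hp, div_mul_eq_mul_div]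
  have happ : ∀ i, (smD lam z v) i = lam * (p i * (v i - m)) := by
    intro i
    rw [hmS, hp]
    simp only [smD, smDcomp, smDinv, smDS, smDe, ContinuousLinearMap.coe_comp',
      Function.comp_apply, ContinuousLinearMap.pi_apply, ContinuousLinearMap.add_apply,
      ContinuousLinearMap.smul_apply, ContinuousLinearMap.coe_sum',
      ContinuousLinearMap.sum_apply, ContinuousLinearMap.smulRight_apply,
      ContinuousLinearMap.one_apply, PiLp.proj_apply, smul_eq_mul,
      ContinuousLinearEquiv.coe_coe, EuclideanSpace.equiv,
      PiLp.coe_symm_continuousLinearEquiv, PiLp.toLp_apply,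
      Finset.sum_apply]
    rw [hsum]
    field_simp
    ring
  have hnormsq : ‖v‖ ^ 2 = ∑ j, (v j) ^ 2 := by
    rw [EuclideanSpace.norm_eq, Real.sq_sqrt (by positivity)]
    exact Finset.sum_congr rfl fun j _ => by rw [Real.norm_eq_abs, sq_abs]
  have hvle : ∀ i, (v i) ^ 2 ≤ ‖v‖ ^ 2 := by
    intro i
    rw [hnormsq]
    exact Finset.single_le_sum (f := fun j => (v j) ^ 2) (fun j _ => sq_nonneg _)
      (Finset.mem_univ i)
  have key : ∑ i, (lam * (p i * (v i - m))) ^ 2 ≤ (lam * ‖v‖) ^ 2 := by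
    have s1 : ∑ i, (lam * (p i * (v i - m))) ^ 2
        ≤ lam ^ 2 * ∑ i, p i * (v i - m) ^ 2 := by
      rw [Finset.mul_sum]
      apply Finset.sum_le_sum
      intro i _
      have h2 : p i ^ 2 ≤ p i := by nlinarith [hppos i, hple i]
      have h3 : lam ^ 2 * (p i * (v i - m) ^ 2) - (lam * (p i * (v i - m))) ^ 2
          = lam ^ 2 * ((p i - p i ^ 2) * (v i - m) ^ 2) := by ring
      have h4 : 0 ≤ lam ^ 2 * ((p i - p i ^ 2) * (v i - m) ^ 2) :=
        mul_nonneg (sq_nonneg _) (mul_nonneg (sub_nonneg.2 h2) (sq_nonneg _))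
      linarith
    have s2 : ∑ i, p i * (v i - m) ^ 2 = (∑ i, p i * (v i) ^ 2) - m ^ 2 := by
      have expand : ∀ i ∈ Finset.univ, p i * (v i - m) ^ 2
          = p i * (v i) ^ 2 - 2 * m * (p i * v i) + m ^ 2 * p i := fun i _ => by ring
      rw [Finset.sum_congr rfl expand, Finset.sum_add_distrib, Finset.sum_sub_distrib,
        ← Finset.mul_sum, ← Finset.mul_sum, hpsum, ← hm]
      ring
    have s3 : ∑ i, p i * (v i) ^ 2 ≤ ‖v‖ ^ 2 := by
      calc ∑ i, p i * (v i) ^ 2 ≤ ∑ i, p i * ‖v‖ ^ 2 :=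
            Finset.sum_le_sum fun i _ =>
              mul_le_mul_of_nonneg_left (hvle i) (hppos i).le
        _ = ‖v‖ ^ 2 := by rw [← Finset.sum_mul, hpsum, one_mul]
    have s4 : ∑ i, p i * (v i - m) ^ 2 ≤ ‖v‖ ^ 2 := by
      rw [s2]; nlinarith [sq_nonneg m]
    calc ∑ i, (lam * (p i * (v i - m))) ^ 2 ≤ lam ^ 2 * ∑ i, p i * (v i - m) ^ 2 := s1
      _ ≤ lam ^ 2 * ‖v‖ ^ 2 := by nlinarith [sq_nonneg lam]
      _ = (lam * ‖v‖) ^ 2 := by ring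
  have hDnorm : ‖smD lam z v‖ = Real.sqrt (∑ i, (lam * (p i * (v i - m))) ^ 2) := by
    rw [EuclideanSpace.norm_eq]
    congr 1
    exact Finset.sum_congr rfl fun i _ => by rw [happ i, Real.norm_eq_abs, sq_abs]
  rw [hDnorm]
  calc Real.sqrt (∑ i, (lam * (p i * (v i - m))) ^ 2)
      ≤ Real.sqrt ((lam * ‖v‖) ^ 2) := Real.sqrt_le_sqrt key
    _ = lam * ‖v‖ := Real.sqrt_sq (by positivity)

/-- Proposition 2 of the paper: the softmax function with
inverse temperature `lam > 0` is `lam`-Lipschitz in the Euclidean norm. -/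
theorem softmax_lipschitz (lam : ℝ) (hlam : 0 < lam) (N : ℕ) (hN : 0 < N) :
    let softmax : EuclideanSpace ℝ (Fin N) → EuclideanSpace ℝ (Fin N) := fun x =>
      WithLp.toLp 2 (fun i => Real.exp (lam * x i) / ∑ j, Real.exp (lam * x j))
    ∀ x y : EuclideanSpace ℝ (Fin N),
      ‖softmax x - softmax y‖ ≤ lam * ‖x - y‖ := by
  intro softmax x y
  exact convex_univ.norm_image_sub_le_of_norm_hasFDerivWithin_le
    (f' := smD lam) (fun z _ => (smHasFDeriv lam hN z).hasFDerivWithinAt)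
    (fun z _ => smD_norm_le lam hlam hN z) (Set.mem_univ y) (Set.mem_univ x)
end

section
/- Let L > 0 and t ∈ (0, 1] with L > t. Define the sequences K_n^{RC} = (L + 1)^n for n ≥ 1, and K_1^{GRC} = L + 1 with K_{n+1}^{GRC} = (L + 1 − t)·K_n^{GRC} + t for n ≥ 1. Then there exist constants c_1, c_2 > 0 (depending only on L and t) such that for all n ≥ 1, c_1 · (1 − t/(L + 1))^n ≤ K_n^{GRC} / K_n^{RC} ≤ c_2 · (1 − t/(L + 1))^n. In particular, for t ∈ (0, 1] this ratio decays geometrically, since 1 − t/(L+1) < 1. -/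
/-- Theorem 3 of the paper, Robustness of Boosting:
with `K_n^{RC} = (L + 1)^n` and `K_1^{GRC} = L + 1`,
`K_{n+1}^{GRC} = (L + 1 − t) K_n^{GRC} + t`, the ratio `K_n^{GRC}/K_n^{RC}`
is `≍ (1 − t/(L+1))^n`, which decays geometrically since `1 − t/(L+1) < 1`. -/
theorem grc_vs_rc_lipschitz_ratio
    (L t : ℝ) (hL : 0 < L) (ht : t ∈ Set.Ioc (0 : ℝ) 1) (hLt : L > t)
    (KGRC : ℕ → ℝ) (hK1 : KGRC 1 = L + 1)
    (hKrec : ∀ n ≥ 1, KGRC (n + 1) = (L + 1 - t) * KGRC n + t) :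
    (∃ c₁ c₂ : ℝ, 0 < c₁ ∧ 0 < c₂ ∧
      ∀ n ≥ 1, c₁ * (1 - t / (L + 1)) ^ n ≤ KGRC n / (L + 1) ^ n ∧
        KGRC n / (L + 1) ^ n ≤ c₂ * (1 - t / (L + 1)) ^ n) ∧
      1 - t / (L + 1) < 1 := by
  obtain ⟨ht0, ht1⟩ := ht
  set a := L + 1 - t with ha
  have ha1 : 1 < a := by rw [ha]; linarith
  have ha0 : 0 < a := by linarith
  have hane : a ≠ 0 := ne_of_gt ha0
  have hLt' : 0 < L - t := by linarith
  set x := -t / (L - t) with hx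
  have hxneg : x < 0 := div_neg_of_neg_of_pos (by linarith) hLt'
  have hxfix : x = a * x + t := by
    rw [hx, ha]
    field_simp
    ring
  set C := (L + 1 - x) / a with hC
  have hCpos : 0 < C := div_pos (by linarith) ha0
  have hCa : C * a = L + 1 - x := by
    rw [hC]; field_simp
  have hclosed : ∀ n ≥ 1, KGRC n = C * a ^ n + x := by
    intro n hn
    induction n, hn using Nat.le_induction with
    | base => rw [hK1, pow_one]; linarith
    | succ n hn ih =>
      rw [hKrec n hn, ih]
      have : a * (C * a ^ n + x) + t = C * a ^ (n + 1) + (a * x + t) := by ring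
      rw [← ha] at *
      rw [this, ← hxfix]
  have hLp1 : (0:ℝ) < L + 1 := by linarith
  have hbase : 1 - t / (L + 1) = a / (L + 1) := by
    rw [ha]; field_simp
  refine ⟨⟨C + x / a, C, ?_, hCpos, ?_⟩, ?_⟩
  · have : C + x / a = (L + 1) / a := by
      rw [hC]; ring
    rw [this]
    exact div_pos hLp1 ha0
  · intro n hn
    have hcl := hclosed n hn
    have hLpn : (0:ℝ) < (L + 1) ^ n := pow_pos hLp1 n
    have hpow : a ≤ a ^ n := by
      calc a = a ^ 1 := (pow_one a).symm
        _ ≤ a ^ n := pow_le_pow_right₀ (le_of_lt ha1) hn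
    constructor
    · rw [hbase, div_pow, hcl, ← mul_div_assoc, div_le_div_iff_of_pos_right hLpn]
      have hy : x / a < 0 := div_neg_of_neg_of_pos hxneg ha0
      have h2 : (x / a) * a ^ n ≤ (x / a) * a :=
        mul_le_mul_of_nonpos_left hpow (le_of_lt hy)
      rw [div_mul_cancel₀ x hane] at h2
      nlinarith
    · rw [hbase, div_pow, hcl, ← mul_div_assoc, div_le_div_iff_of_pos_right hLpn]
      nlinarith
  · have : 0 < t / (L + 1) := div_pos ht0 hLp1
    linarith
end
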